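/- arXiv:2402.13601 — 2 statements merged into one kernel-verified Lean document; each statement's English description precedes it below -/
import Mathlib

section
/- Let δ ≥ 3, n ≥ 2δ² and s be integers with δ + 1 ≤ s ≤ (n−2)/(δ−1). Then ρ(K_s ∨ (K_{n−(δ−1)s−1} ∪ ((δ−2)s+1)K_1)) < ρ(K_δ ∨ (K_{n−δ(δ−1)−1} ∪ (δ(δ−2)+1)K_1)). -/
/-!
Write `G(a) = K_a ∨ (K_{n-(δ-1)a-1} ∪ ((δ-2)a+1)K_1)` and `φ_a` for the characteristic polynomial
of the quotient matrix of its equitable partition into three parts. A positive vector that is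
constant on the parts is then an eigenvector for a root `x` of `φ_a`, and satisfies `A w ≤ x w`
wherever `φ_a(x) > 0`; so `x ≤ ρ(G(a))` in the first case and `ρ(G(a)) ≤ x` in the second
(Collatz–Wielandt).

`φ_δ` is negative at `x₀ = n - δ(δ-2) - 2` and positive at `n`, giving a root `Λ > x₀` with
`Λ ≤ ρ(G(δ))`. As `φ_s = φ_δ + (s - δ) Q` for a quadratic `Q` that is positive on `[x₀, ∞)`, we get
`φ_s(Λ) > 0`, so `φ_s` stays positive slightly below `Λ` and `ρ(G(s)) < Λ`.
-/

open Finset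

/-- The spectral radius of a finite simple graph: the largest eigenvalue of its
adjacency matrix (over `ℝ`). -/
noncomputable def specRad {V : Type*} [Fintype V] (G : SimpleGraph V) : ℝ :=
  letI := Classical.decEq V
  letI := Classical.decRel G.Adj
  sSup (spectrum ℝ (G.adjMatrix ℝ))

/-- `joinCliques s t f` is the graph `K_s ∨ (K_{f 0} ∪ K_{f 1} ∪ ⋯ ∪ K_{f (t-1)})`. -/
def joinCliques (s t : ℕ) (f : Fin t → ℕ) :
    SimpleGraph (Fin s ⊕ (Σ i : Fin t, Fin (f i))) where
  Adj x y := x ≠ y ∧ ∀ a b, x = Sum.inr a → y = Sum.inr b → a.1 = b.1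
  symm := ⟨fun _x _y h => ⟨h.1.symm, fun a b hy hx => (h.2 b a hx hy).symm⟩⟩
  loopless := ⟨fun _x h => h.1 rfl⟩

/-- `gJoin s m t p` is the graph `K_s ∨ (K_m ∪ t·K_p)`. -/
def gJoin (s m t p : ℕ) :=
  joinCliques s (t + 1) (Fin.cons m fun _ => p)

namespace Matrix

variable {n : Type*} [Fintype n] [DecidableEq n]

theorem mem_spectrum_iff_exists_mulVec_eq_smul {K : Type*} [Field K] {A : Matrix n n K} {μ : K} :
    μ ∈ spectrum K A ↔ ∃ v ≠ 0, A *ᵥ v = μ • v := by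
  rw [← spectrum_toLin', ← Module.End.hasEigenvalue_iff_mem_spectrum,
    Module.End.hasEigenvalue_iff, Submodule.ne_bot_iff]
  simp only [Module.End.mem_eigenspace_iff, toLin'_apply]
  tauto

theorem abs_le_of_mem_spectrum_of_mulVec_le {A : Matrix n n ℝ} (hA : ∀ i j, 0 ≤ A i j)
    {w : n → ℝ} (hw : ∀ i, 0 < w i) {r : ℝ} (hAw : A *ᵥ w ≤ r • w) {μ : ℝ}
    (hμ : μ ∈ spectrum ℝ A) : |μ| ≤ r := by
  obtain ⟨v, hv0, hv⟩ := mem_spectrum_iff_exists_mulVec_eq_smul.mp hμ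
  obtain ⟨j, hj⟩ := Function.ne_iff.mp hv0
  obtain ⟨i, -, hi⟩ := Finset.exists_max_image Finset.univ (fun j => |v j| / w j)
    ⟨j, Finset.mem_univ j⟩
  set c := |v i| / w i
  have hvc (j : n) : |v j| ≤ c * w j := (div_le_iff₀ (hw j)).mp (hi j (Finset.mem_univ j))
  have hc : 0 < c := (div_pos (abs_pos.2 hj) (hw j)).trans_le (hi j (Finset.mem_univ j))
  have hvi : |v i| = c * w i := (div_mul_cancel₀ _ (hw i).ne').symm
  have key : |μ| * (c * w i) ≤ r * (c * w i) := calc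
    |μ| * (c * w i) = |(A *ᵥ v) i| := by rw [hv, ← hvi, Pi.smul_apply, smul_eq_mul, abs_mul]
    _ ≤ ∑ j, A i j * |v j| := by
      simp only [mulVec, dotProduct]
      refine (Finset.abs_sum_le_sum_abs _ _).trans_eq (Finset.sum_congr rfl fun j _ => ?_)
      rw [abs_mul, abs_of_nonneg (hA i j)]
    _ ≤ ∑ j, A i j * (c * w j) :=
      Finset.sum_le_sum fun j _ => mul_le_mul_of_nonneg_left (hvc j) (hA i j)
    _ = c * (A *ᵥ w) i := by
      simp only [mulVec, dotProduct, Finset.mul_sum]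
      exact Finset.sum_congr rfl fun j _ => by ring
    _ ≤ c * (r * w i) := mul_le_mul_of_nonneg_left (hAw i) hc.le
    _ = r * (c * w i) := by ring
  exact le_of_mul_le_mul_right key (mul_pos hc (hw i))

end Matrix

open Matrix

namespace SimpleGraph

variable {V : Type*} [Fintype V] [DecidableEq V] (G : SimpleGraph V) [DecidableRel G.Adj]

theorem specRad_eq_sSup : specRad G = sSup (spectrum ℝ (G.adjMatrix ℝ)) := by
  unfold specRad
  congr!

theorem specRad_le_of_adjMatrix_mulVec_le {w : V → ℝ} (hw : ∀ i, 0 < w i) {r : ℝ} (hr : 0 ≤ r)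
    (h : G.adjMatrix ℝ *ᵥ w ≤ r • w) : specRad G ≤ r := by
  rw [specRad_eq_sSup]
  refine Real.sSup_le (fun μ hμ => (le_abs_self μ).trans ?_) hr
  refine Matrix.abs_le_of_mem_spectrum_of_mulVec_le (fun i j => ?_) hw h hμ
  rw [adjMatrix_apply]; positivity

theorem le_specRad_of_adjMatrix_mulVec_eq {v : V → ℝ} (hv : v ≠ 0) {μ : ℝ}
    (h : G.adjMatrix ℝ *ᵥ v = μ • v) : μ ≤ specRad G := by
  rw [specRad_eq_sSup]
  exact le_csSup (Matrix.finite_real_spectrum.bddAbove)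
    (Matrix.mem_spectrum_iff_exists_mulVec_eq_smul.mpr ⟨v, hv, h⟩)

end SimpleGraph

theorem Fintype.sum_ite_eq_zero_const {α : Type*} [Fintype α] [DecidableEq α] (k : α) (a : ℝ) :
    ∑ x, (if k = x then 0 else a) = (Fintype.card α - 1) * a := by
  have h (x : α) : (if k = x then 0 else a) = a - if k = x then a else 0 := by split_ifs <;> ring
  simp only [h, Finset.sum_sub_distrib, Finset.sum_ite_eq, Finset.mem_univ, if_true,
    Finset.sum_const, Finset.card_univ, nsmul_eq_mul]
  ring

section joinCliques

variable {s t : ℕ} {f : Fin t → ℕ}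

@[simp]
theorem joinCliques_adj_inl (k : Fin s) (y : Fin s ⊕ (Σ i : Fin t, Fin (f i))) :
    (joinCliques s t f).Adj (Sum.inl k) y ↔ Sum.inl k ≠ y := by
  simp [joinCliques]

@[simp]
theorem joinCliques_adj_inr_inl (q : Σ i : Fin t, Fin (f i)) (k : Fin s) :
    (joinCliques s t f).Adj (Sum.inr q) (Sum.inl k) := by
  simp [joinCliques]

@[simp]
theorem joinCliques_adj_inr_inr (q q' : Σ i : Fin t, Fin (f i)) :
    (joinCliques s t f).Adj (Sum.inr q) (Sum.inr q') ↔ q ≠ q' ∧ q.1 = q'.1 := by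
  simp [joinCliques]

variable (s t f) in
def joinCliquesVec (a : ℝ) (β : Fin t → ℝ) : Fin s ⊕ (Σ i : Fin t, Fin (f i)) → ℝ :=
  Sum.elim (fun _ => a) (fun q => β q.1)

variable [DecidableRel (joinCliques s t f).Adj] (a : ℝ) (β : Fin t → ℝ)

theorem joinCliques_adjMatrix_mulVec_inl (k : Fin s) :
    ((joinCliques s t f).adjMatrix ℝ *ᵥ joinCliquesVec s t f a β) (Sum.inl k) =
      (s - 1) * a + ∑ i, f i * β i := by
  simp [mulVec, dotProduct, SimpleGraph.adjMatrix_apply, Fintype.sum_sum_type, joinCliquesVec,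
    Fintype.sum_ite_eq_zero_const, Fintype.sum_sigma]

theorem joinCliques_adjMatrix_mulVec_inr (i : Fin t) (k : Fin (f i)) :
    ((joinCliques s t f).adjMatrix ℝ *ᵥ joinCliquesVec s t f a β) (Sum.inr ⟨i, k⟩) =
      s * a + (f i - 1) * β i := by
  simp only [mulVec, dotProduct, SimpleGraph.adjMatrix_apply, Fintype.sum_sum_type,
    joinCliquesVec, Sum.elim_inl, Sum.elim_inr, joinCliques_adj_inr_inl, joinCliques_adj_inr_inr,
    ↓reduceIte, one_mul, ite_mul, zero_mul, Finset.sum_const, Finset.card_univ, Fintype.card_fin,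
    nsmul_eq_mul, ne_eq, add_right_inj]
  rw [Fintype.sum_sigma, Finset.sum_eq_single i]
  · simp [Fintype.sum_ite_eq_zero_const]
  · intro j _ hj; simp [Ne.symm hj]
  · simp

end joinCliques

/-- The characteristic polynomial of `[[s-1, m, t], [s, m-1, 0], [s, 0, 0]]`, the quotient matrix of
`K_s ∨ (K_m ∪ t K_1)` for its partition into `K_s`, `K_m` and the isolated vertices. -/
def quotientPoly (s m t x : ℝ) : ℝ :=
  x * (x - s + 1) * (x - m + 1) - m * s * x - t * s * (x - m + 1)

noncomputable def gJoinVec (s m t : ℕ) (x : ℝ) :=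
  joinCliquesVec s (t + 1) (Fin.cons m fun _ => 1) 1 (Fin.cons (s / (x - m + 1)) fun _ => s / x)

theorem gJoin_adjMatrix_mulVec {s m t : ℕ} [DecidableRel (gJoin s m t 1).Adj] {x : ℝ}
    (hx : x ≠ 0) (hxm : x - m + 1 ≠ 0) :
    (gJoin s m t 1).adjMatrix ℝ *ᵥ gJoinVec s m t x =
      x • gJoinVec s m t x -
        (quotientPoly s m t x / (x * (x - m + 1))) • Sum.elim (fun _ => (1 : ℝ)) 0 := by
  unfold gJoin at *
  funext v
  rcases v with k | ⟨i, k⟩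
  · rw [gJoinVec, joinCliques_adjMatrix_mulVec_inl]
    simp only [joinCliquesVec, quotientPoly, Fin.sum_univ_succ, Fin.cons_zero, Fin.cons_succ,
      Finset.sum_const, Finset.card_univ, Fintype.card_fin, nsmul_eq_mul, Nat.cast_one, mul_one,
      one_mul, Pi.sub_apply, Pi.smul_apply, Sum.elim_inl, smul_eq_mul]
    field_simp
    ring
  · rw [gJoinVec, joinCliques_adjMatrix_mulVec_inr]
    induction i using Fin.cases with
    | zero =>
      simp only [joinCliquesVec, Fin.cons_zero, Pi.sub_apply, Pi.smul_apply, Sum.elim_inr,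
        smul_eq_mul, Pi.zero_apply, mul_zero, sub_zero, mul_one]
      field_simp
      ring
    | succ i =>
      simp only [joinCliquesVec, Fin.cons_succ, Pi.sub_apply, Pi.smul_apply, Sum.elim_inr,
        smul_eq_mul, Pi.zero_apply, mul_zero, sub_zero, mul_one, Nat.cast_one, sub_self, zero_mul,
        add_zero]
      field_simp

theorem le_specRad_gJoin {s m t : ℕ} (hs : 0 < s) {x : ℝ} (hx : 0 < x) (hxm : (m : ℝ) - 1 < x)
    (hroot : quotientPoly s m t x = 0) : x ≤ specRad (gJoin s m t 1) := by
  classical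
  refine (gJoin s m t 1).le_specRad_of_adjMatrix_mulVec_eq (v := gJoinVec s m t x) ?_ ?_
  · exact Function.ne_iff.mpr ⟨Sum.inl ⟨0, hs⟩, one_ne_zero⟩
  · rw [gJoin_adjMatrix_mulVec hx.ne' (by linarith), hroot, zero_div, zero_smul, sub_zero]

theorem specRad_gJoin_le {s m t : ℕ} (hs : 0 < s) {x : ℝ} (hx : 0 < x) (hxm : (m : ℝ) - 1 < x)
    (hpos : 0 < quotientPoly s m t x) : specRad (gJoin s m t 1) ≤ x := by
  classical
  have hs' : (0 : ℝ) < s := Nat.cast_pos.mpr hs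
  refine (gJoin s m t 1).specRad_le_of_adjMatrix_mulVec_le (w := gJoinVec s m t x) ?_ hx.le ?_
  · rintro (k | ⟨i, k⟩)
    · exact one_pos
    · induction i using Fin.cases with
      | zero => exact div_pos hs' (by linarith)
      | succ i => exact div_pos hs' hx
  · rw [gJoin_adjMatrix_mulVec hx.ne' (by linarith), sub_le_self_iff]
    refine smul_nonneg (div_nonneg hpos.le (mul_pos hx (by linarith)).le) ?_
    rintro (k | q) <;> simp

section

variable {d n s : ℝ}

theorem quotientPoly_at_lower (d n : ℝ) :
    quotientPoly d (n - (d - 1) * d - 1) ((d - 2) * d + 1) (n - d * (d - 2) - 2) =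
      -((d * (d - 2) + 1) * d ^ 2) := by
  unfold quotientPoly; ring

theorem quotientPoly_at_n_pos (hd : 3 ≤ d) (hn : 2 * d ^ 2 ≤ n) :
    0 < quotientPoly d (n - (d - 1) * d - 1) ((d - 2) * d + 1) n := by
  obtain ⟨N, hN, rfl⟩ : ∃ N, 0 ≤ N ∧ n = N + 2 * d ^ 2 := ⟨n - 2 * d ^ 2, by linarith, by ring⟩
  obtain ⟨e, he, rfl⟩ : ∃ e, 0 ≤ e ∧ d = e + 3 := ⟨d - 3, by linarith, by ring⟩
  unfold quotientPoly
  ring_nf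
  positivity

def gapPoly (d n s x : ℝ) : ℝ :=
  (d - 2) * x ^ 2 - x * (d ^ 2 + d * s - 3 * d - 2 * s + 3)
    + n * (d ^ 2 + d * s - 2 * d - 2 * s + 1) - d ^ 4 - d ^ 3 * s + 3 * d ^ 3 - d ^ 2 * s ^ 2
    + 3 * d ^ 2 * s - 5 * d ^ 2 + 3 * d * s ^ 2 - 5 * d * s + 5 * d - 2 * s ^ 2 + 5 * s - 2

theorem quotientPoly_eq_add_gapPoly (d n s x : ℝ) :
    quotientPoly s (n - (d - 1) * s - 1) ((d - 2) * s + 1) x =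
      quotientPoly d (n - (d - 1) * d - 1) ((d - 2) * d + 1) x + (s - d) * gapPoly d n s x := by
  unfold quotientPoly gapPoly; ring

theorem gapPoly_at_lower_pos (hd : 3 ≤ d) (hn : 2 * d ^ 2 ≤ n) (hs₁ : d + 1 ≤ s)
    (hs₂ : (d - 1) * s ≤ n - 2) : 0 < gapPoly d n s (n - d * (d - 2) - 2) := by
  have hw : 0 ≤ n - 2 - (d - 1) * s := by linarith
  have hsq : 0 ≤ (n - 2 - (d - 1) * s) * (n - 2 + (d - 1) * s) :=
    mul_nonneg hw (by nlinarith)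
  have hR : 0 < (d - 1) * gapPoly d n s (n - d * (d - 2) - 2)
      - (d - 2) * ((n - 2 - (d - 1) * s) * (n - 2 + (d - 1) * s))
      - (d ^ 2 - d - 1) * (n - 2 - (d - 1) * s) := by
    -- in terms of `n - 2d² ≥ 0` and `d - 3 ≥ 0` this has only positive coefficients
    obtain ⟨N, hN, rfl⟩ : ∃ N, 0 ≤ N ∧ n = N + 2 * d ^ 2 := ⟨n - 2 * d ^ 2, by linarith, by ring⟩
    obtain ⟨e, he, rfl⟩ : ∃ e, 0 ≤ e ∧ d = e + 3 := ⟨d - 3, by linarith, by ring⟩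
    unfold gapPoly
    ring_nf
    positivity
  refine pos_of_mul_pos_right (a := d - 1) ?_ (by linarith)
  nlinarith [mul_nonneg (by linarith : 0 ≤ d - 2) hsq,
    mul_nonneg (by nlinarith : 0 ≤ d ^ 2 - d - 1) hw]

theorem gapPoly_pos (hd : 3 ≤ d) (hn : 2 * d ^ 2 ≤ n) (hs₁ : d + 1 ≤ s)
    (hs₂ : (d - 1) * s ≤ n - 2) {x : ℝ} (hx : n - d * (d - 2) - 2 ≤ x) :
    0 < gapPoly d n s x := by
  obtain ⟨y, hy, rfl⟩ : ∃ y, 0 ≤ y ∧ x = n - d * (d - 2) - 2 + y := ⟨_, sub_nonneg.2 hx, by ring⟩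
  have hslope :
      0 ≤ 2 * (d - 2) * (n - d * (d - 2) - 2) - (d ^ 2 + d * s - 3 * d - 2 * s + 3) := by
    have : (d - 2) * s ≤ n - 2 := by nlinarith
    nlinarith [mul_le_mul_of_nonneg_right hn (by linarith : 0 ≤ 2 * d - 5)]
  have key : gapPoly d n s (n - d * (d - 2) - 2 + y) = gapPoly d n s (n - d * (d - 2) - 2) +
      y * (2 * (d - 2) * (n - d * (d - 2) - 2) - (d ^ 2 + d * s - 3 * d - 2 * s + 3)
        + (d - 2) * y) := by
    unfold gapPoly; ring
  rw [key]
  exact add_pos_of_pos_of_nonneg (gapPoly_at_lower_pos hd hn hs₁ hs₂)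
    (mul_nonneg hy (add_nonneg hslope (mul_nonneg (by linarith) hy)))

theorem continuous_quotientPoly (s m t : ℝ) : Continuous (quotientPoly s m t) := by
  unfold quotientPoly; fun_prop

theorem exists_quotientPoly_root (hd : 3 ≤ d) (hn : 2 * d ^ 2 ≤ n) :
    ∃ Λ, n - d * (d - 2) - 2 < Λ ∧
      quotientPoly d (n - (d - 1) * d - 1) ((d - 2) * d + 1) Λ = 0 := by
  have hsign : (0 : ℝ) ∈ Set.Ioo
      (quotientPoly d (n - (d - 1) * d - 1) ((d - 2) * d + 1) (n - d * (d - 2) - 2))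
      (quotientPoly d (n - (d - 1) * d - 1) ((d - 2) * d + 1) n) := by
    rw [quotientPoly_at_lower]
    exact ⟨neg_neg_of_pos (mul_pos (by nlinarith) (by positivity)), quotientPoly_at_n_pos hd hn⟩
  obtain ⟨Λ, hΛ, hroot⟩ := intermediate_value_Ioo (by nlinarith)
    (continuous_quotientPoly _ _ _).continuousOn hsign
  exact ⟨Λ, hΛ.1, hroot⟩

theorem exists_quotientPoly_pos_lt_root (hd : 3 ≤ d) (hn : 2 * d ^ 2 ≤ n) (hs₁ : d + 1 ≤ s)
    (hs₂ : (d - 1) * s ≤ n - 2) :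
    ∃ x Λ, n - d * (d - 2) - 2 < x ∧ x < Λ ∧
      0 < quotientPoly s (n - (d - 1) * s - 1) ((d - 2) * s + 1) x ∧
      quotientPoly d (n - (d - 1) * d - 1) ((d - 2) * d + 1) Λ = 0 := by
  obtain ⟨Λ, hΛ, hroot⟩ := exists_quotientPoly_root hd hn
  have hpos : 0 < quotientPoly s (n - (d - 1) * s - 1) ((d - 2) * s + 1) Λ := by
    rw [quotientPoly_eq_add_gapPoly, hroot, zero_add]
    exact mul_pos (by linarith) (gapPoly_pos hd hn hs₁ hs₂ hΛ.le)
  have hnear : ∀ᶠ y in nhds Λ, n - d * (d - 2) - 2 < y ∧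
      0 < quotientPoly s (n - (d - 1) * s - 1) ((d - 2) * s + 1) y :=
    (eventually_gt_nhds hΛ).and (continuousAt_const.eventually_lt
      (continuous_quotientPoly _ _ _).continuousAt hpos)
  obtain ⟨x, ⟨hx, hxpos⟩, hxΛ⟩ := (hnear.filter_mono nhdsWithin_le_nhds |>.and
    (self_mem_nhdsWithin : Set.Iio Λ ∈ nhdsWithin Λ (Set.Iio Λ))).exists
  exact ⟨x, Λ, hx, hxΛ, hxpos, hroot⟩

end

/-- Let `δ ≥ 3`, `n ≥ 2δ²` and `s` be integers with `δ + 1 ≤ s ≤ (n−2)/(δ−1)`.  Then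
`ρ(K_s ∨ (K_{n−(δ−1)s−1} ∪ ((δ−2)s+1)K_1)) <
  ρ(K_δ ∨ (K_{n−δ(δ−1)−1} ∪ (δ(δ−2)+1)K_1))`. -/
theorem stmt_10 (δ n s : ℕ) (hδ : 3 ≤ δ) (hn : 2 * δ ^ 2 ≤ n)
    (hs₁ : δ + 1 ≤ s) (hs₂ : (s : ℝ) ≤ ((n : ℝ) - 2) / ((δ : ℝ) - 1)) :
    specRad (gJoin s (n - (δ - 1) * s - 1) ((δ - 2) * s + 1) 1) <
      specRad (gJoin δ (n - δ * (δ - 1) - 1) (δ * (δ - 2) + 1) 1) := by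
  have hd : (3 : ℝ) ≤ δ := by exact_mod_cast hδ
  have hs₁' : (δ : ℝ) + 1 ≤ s := by exact_mod_cast hs₁
  have hs₂' : ((δ : ℝ) - 1) * s ≤ n - 2 := by rwa [le_div_iff₀ (by linarith), mul_comm] at hs₂
  have hcast (a : ℕ) (ha : (δ - 1) * a + 1 ≤ n) :
      ((n - (δ - 1) * a - 1 : ℕ) : ℝ) = n - (δ - 1) * a - 1 ∧
        (((δ - 2) * a + 1 : ℕ) : ℝ) = (δ - 2) * a + 1 := by
    rw [Nat.sub_sub, Nat.cast_sub ha]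
    push_cast [Nat.cast_sub (by omega : 1 ≤ δ), Nat.cast_sub (by omega : 2 ≤ δ)]
    constructor <;> ring
  obtain ⟨hMs, hTs⟩ := hcast s <| by
    have h : (((δ - 1) * s + 2 : ℕ) : ℝ) ≤ n := by
      push_cast [Nat.cast_sub (by omega : 1 ≤ δ)]; linarith
    exact (Nat.le_succ _).trans (by exact_mod_cast h)
  obtain ⟨hMδ, hTδ⟩ := hcast δ (by nlinarith [Nat.mul_le_mul_right δ (Nat.sub_le δ 1)])
  obtain ⟨x, Λ, hx, hxΛ, hpos, hroot⟩ :=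
    exists_quotientPoly_pos_lt_root hd (by exact_mod_cast hn) hs₁' hs₂'
  rw [Nat.mul_comm δ (δ - 1), Nat.mul_comm δ (δ - 2)]
  calc specRad (gJoin s (n - (δ - 1) * s - 1) ((δ - 2) * s + 1) 1) ≤ x :=
        specRad_gJoin_le (by omega) (by nlinarith) (by rw [hMs]; nlinarith) (by rwa [hMs, hTs])
    _ < Λ := hxΛ
    _ ≤ specRad (gJoin δ (n - (δ - 1) * δ - 1) ((δ - 2) * δ + 1) 1) :=
        le_specRad_gJoin (by omega) (by nlinarith) (by rw [hMδ]; nlinarith) (by rwa [hMδ, hTδ])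
end

section
/- Let δ ≥ 3, s and n be integers with 1 ≤ s ≤ δ − 1 and n ≥ ((δ−2)s+2)(δ+1−s) + s. Then the spectral radius of the graph G₃ = K_s ∨ (K_{n−s−((δ−2)s+1)(δ+1−s)} ∪ ((δ−2)s+1)K_{δ+1−s}) equals the largest real root of the cubic polynomial φ(x) = x³ + ((−δ+2)s² + (δ²−δ−2)s − n + 3)x² + ((δ²−3δ+2)s² − (n + δ³ − 2δ² − 2δ + 1)s + δn − n − δ² − 2δ + 2)x + ((2−δ)s³ + (δ²−δ−3)s² + δs + δ)n − (δ−2)²s⁵ + (2δ³−6δ²−δ+10)s⁴ − (δ⁴−2δ³−6δ²+7δ+10)s³ − (2δ³−δ²−5δ−5)s² − (δ³−δ)s − δ² − 2δ. -/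
open Finset

/-!
The partition of `K_s ∨ (K_m ∪ t K_p)` into `K_s`, `K_m` and the union of the copies of `K_p` is
equitable. Its quotient matrix `B` has characteristic polynomial `φ`, and block-constant vectors
turn eigenvectors of `B` into eigenvectors of the adjacency matrix `A`, so every root of `φ` is an
eigenvalue of `A`. Conversely, an eigenvector of `A` for an eigenvalue other than `-1` and `p - 1`
is block-constant and yields an eigenvector of `B`. Since `φ(s + m - 1) < 0`, `φ` has a root at least `s + m - 1 > p - 1`, hence so
does `A`; the spectral radius is therefore a root of `φ`, and it dominates all roots of `φ`.
-/

open Matrix Filter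

theorem Matrix.mem_spectrum_iff_exists_mulVec_eq_smul_s12 {n K : Type*} [Fintype n] [DecidableEq n]
    [Field K] {A : Matrix n n K} {x : K} : x ∈ spectrum K A ↔ ∃ v ≠ 0, A *ᵥ v = x • v := by
  rw [← spectrum_toLin', ← Module.End.hasEigenvalue_iff_mem_spectrum]
  constructor
  · intro h
    obtain ⟨v, hv⟩ := h.exists_hasEigenvector
    exact ⟨v, hv.2, by simpa using hv.apply_eq_smul⟩
  · rintro ⟨v, hv, h⟩
    exact Module.End.hasEigenvalue_of_hasEigenvector
      ⟨by simpa [Module.End.mem_eigenspace_iff] using h, hv⟩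

theorem Matrix.exists_mem_spectrum_ge_of_eval_charpoly_nonpos {n : Type*} [Fintype n]
    [DecidableEq n] [Nonempty n] (A : Matrix n n ℝ) {y : ℝ} (hy : A.charpoly.eval y ≤ 0) :
    ∃ x ∈ spectrum ℝ A, y ≤ x := by
  have hdeg : 0 < A.charpoly.degree := by
    rw [A.charpoly_degree_eq_dim, Nat.cast_pos]
    exact Fintype.card_pos
  obtain ⟨X, hXpos, hyX⟩ := ((Polynomial.tendsto_atTop_of_leadingCoeff_nonneg _ hdeg
    (by rw [A.charpoly_monic.leadingCoeff]; exact zero_le_one)).eventually_gt_atTop 0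
    |>.and (eventually_ge_atTop y)).exists
  obtain ⟨x, hx, hroot⟩ := intermediate_value_Icc hyX A.charpoly.continuous.continuousOn
    ⟨hy, hXpos.le⟩
  exact ⟨x, mem_spectrum_iff_isRoot_charpoly.2 hroot, hx.1⟩

section specRad
variable {V : Type*} [Fintype V] [DecidableEq V] {G : SimpleGraph V} [DecidableRel G.Adj]

theorem specRad_eq_sSup_spectrum : specRad G = sSup (spectrum ℝ (G.adjMatrix ℝ)) := by
  unfold specRad
  congr!

theorem le_specRad {x : ℝ} (hx : x ∈ spectrum ℝ (G.adjMatrix ℝ)) : x ≤ specRad G := by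
  rw [specRad_eq_sSup_spectrum]
  exact le_csSup (G.adjMatrix ℝ).finite_spectrum.bddAbove hx

theorem specRad_mem_spectrum (h : (spectrum ℝ (G.adjMatrix ℝ)).Nonempty) :
    specRad G ∈ spectrum ℝ (G.adjMatrix ℝ) := by
  rw [specRad_eq_sSup_spectrum]
  exact h.csSup_mem (G.adjMatrix ℝ).finite_spectrum

end specRad

namespace joinCliques

variable {S T : ℕ} {f : Fin T → ℕ}

@[simp] lemma adj_inl_inl {j j' : Fin S} :
    (joinCliques S T f).Adj (.inl j) (.inl j') ↔ j ≠ j' := by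
  simp [joinCliques]

@[simp] lemma adj_inl_inr (j : Fin S) (a : Σ i : Fin T, Fin (f i)) :
    (joinCliques S T f).Adj (.inl j) (.inr a) := by
  simp [joinCliques]

@[simp] lemma adj_inr_inl (j : Fin S) (a : Σ i : Fin T, Fin (f i)) :
    (joinCliques S T f).Adj (.inr a) (.inl j) := by
  simp [joinCliques]

@[simp] lemma adj_inr_inr {a b : Σ i : Fin T, Fin (f i)} :
    (joinCliques S T f).Adj (.inr a) (.inr b) ↔ a ≠ b ∧ a.1 = b.1 := by
  simp [joinCliques]

def blockVec (S : ℕ) (f : Fin T → ℕ) (a : ℝ) (β : Fin T → ℝ) :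
    Fin S ⊕ (Σ i : Fin T, Fin (f i)) → ℝ :=
  Sum.elim (fun _ => a) fun q => β q.1

lemma smul_blockVec (x a : ℝ) (β : Fin T → ℝ) :
    x • blockVec S f a β = blockVec S f (x * a) fun i => x * β i := by
  funext u
  rcases u with j | q <;> rfl

variable [DecidableRel (joinCliques S T f).Adj]

lemma mulVec_inl (v : Fin S ⊕ (Σ i : Fin T, Fin (f i)) → ℝ) (j : Fin S) :
    ((joinCliques S T f).adjMatrix ℝ *ᵥ v) (.inl j)
      = (∑ j', v (.inl j')) - v (.inl j) + ∑ a, v (.inr a) := by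
  have hsplit (j' : Fin S) :
      (if (joinCliques S T f).Adj (.inl j) (.inl j') then (1 : ℝ) else 0) * v (.inl j')
        = v (.inl j') - if j = j' then v (.inl j') else 0 := by
    by_cases hj : j = j' <;> simp [hj]
  simp only [mulVec, dotProduct, SimpleGraph.adjMatrix_apply, Fintype.sum_sum_type, hsplit,
    adj_inl_inr, if_true, one_mul, Finset.sum_sub_distrib, Finset.sum_ite_eq, Finset.mem_univ]

lemma mulVec_inr (v : Fin S ⊕ (Σ i : Fin T, Fin (f i)) → ℝ) (i : Fin T) (k : Fin (f i)) :
    ((joinCliques S T f).adjMatrix ℝ *ᵥ v) (.inr ⟨i, k⟩)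
      = (∑ j', v (.inl j')) + ((∑ k', v (.inr ⟨i, k'⟩)) - v (.inr ⟨i, k⟩)) := by
  have hsplit (b : Σ i : Fin T, Fin (f i)) :
      (if (joinCliques S T f).Adj (.inr ⟨i, k⟩) (.inr b) then (1 : ℝ) else 0) * v (.inr b)
        = (if i = b.1 then v (.inr b) else 0) - if ⟨i, k⟩ = b then v (.inr b) else 0 := by
    by_cases hb : ⟨i, k⟩ = b
    · subst hb; simp
    · simp [hb]
  simp only [mulVec, dotProduct, SimpleGraph.adjMatrix_apply, Fintype.sum_sum_type, hsplit,
    adj_inr_inl, if_true, one_mul, Finset.sum_sub_distrib, Finset.sum_ite_eq, Finset.mem_univ,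
    Fintype.sum_sigma]
  rw [Fintype.sum_eq_single i fun i' hi' => by simp [Ne.symm hi']]
  simp

lemma mulVec_blockVec (a : ℝ) (β : Fin T → ℝ) :
    (joinCliques S T f).adjMatrix ℝ *ᵥ blockVec S f a β
      = blockVec S f ((S - 1) * a + ∑ i, f i * β i) fun i => S * a + (f i - 1) * β i := by
  funext u
  rcases u with j | ⟨i, k⟩
  · rw [mulVec_inl]
    simp only [blockVec, Sum.elim_inl, Sum.elim_inr, Fintype.sum_sigma, Finset.sum_const,
      Finset.card_univ, Fintype.card_fin, nsmul_eq_mul]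
    ring
  · rw [mulVec_inr]
    simp only [blockVec, Sum.elim_inl, Sum.elim_inr, Finset.sum_const, Finset.card_univ,
      Fintype.card_fin, nsmul_eq_mul]
    ring

/-- Vertices in the same block have the same closed neighbourhood, so `(x + 1) • v` is constant
on blocks. -/
lemma exists_blockVec_of_mulVec_eq_smul {v : Fin S ⊕ (Σ i : Fin T, Fin (f i)) → ℝ} {x : ℝ}
    (hx : x ≠ -1) (hv : (joinCliques S T f).adjMatrix ℝ *ᵥ v = x • v) :
    ∃ a β, v = blockVec S f a β ∧ x * a = (S - 1) * a + ∑ i, f i * β i ∧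
      ∀ i, x * β i = S * a + (f i - 1) * β i := by
  have hx' : x + 1 ≠ 0 := by contrapose! hx; linarith
  set a := ((∑ j, v (.inl j)) + ∑ q, v (.inr q)) / (x + 1)
  set β := fun i => ((∑ j, v (.inl j)) + ∑ k, v (.inr ⟨i, k⟩)) / (x + 1)
  have hinl (j : Fin S) : v (.inl j) = a := by
    have := congrFun hv (.inl j)
    rw [mulVec_inl, Pi.smul_apply, smul_eq_mul] at this
    rw [eq_div_iff hx']
    linarith
  have hinr (i : Fin T) (k : Fin (f i)) : v (.inr ⟨i, k⟩) = β i := by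
    have := congrFun hv (.inr ⟨i, k⟩)
    rw [mulVec_inr, Pi.smul_apply, smul_eq_mul] at this
    rw [eq_div_iff hx']
    linarith
  have hv_eq : v = blockVec S f a β := by
    funext u
    rcases u with j | ⟨i, k⟩
    · exact hinl j
    · exact hinr i k
  have hblock (i : Fin T) : ∑ k, v (.inr ⟨i, k⟩) = f i * β i := by simp [hinr]
  have ha : a * (x + 1) = S * a + ∑ i, f i * β i := by
    rw [div_mul_cancel₀ _ hx', Fintype.sum_sigma]
    simp only [hinl, hblock, Finset.sum_const, Finset.card_univ, Fintype.card_fin, nsmul_eq_mul]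
  have hβ (i : Fin T) : β i * (x + 1) = S * a + f i * β i := by
    rw [div_mul_cancel₀ _ hx', hblock]
    simp [hinl]
  exact ⟨a, β, hv_eq, by linarith, fun i => by linarith [hβ i]⟩

end joinCliques

/-- The quotient matrix of the partition of `gJoin S m t p` into `K_S`, `K_m` and the union of
the `t` copies of `K_p`. -/
def gJoinQuotient (S m t p : ℕ) : Matrix (Fin 3) (Fin 3) ℝ :=
  !![(S : ℝ) - 1, m, t * p; S, (m : ℝ) - 1, 0; S, 0, (p : ℝ) - 1]

lemma eval_charpoly_gJoinQuotient (S m t p : ℕ) (x : ℝ) :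
    (gJoinQuotient S m t p).charpoly.eval x
      = (x - (S - 1)) * (x - (m - 1)) * (x - (p - 1)) - m * S * (x - (p - 1))
        - t * p * S * (x - (m - 1)) := by
  rw [eval_charpoly, det_fin_three]
  simp only [gJoinQuotient, scalar_apply, Matrix.sub_apply, diagonal_apply_eq, diagonal_apply_ne,
    ne_eq, Fin.reduceEq, not_false_eq_true, of_apply, cons_val', cons_val_zero, cons_val_one,
    cons_val_fin_one, Matrix.cons_val]
  ring

lemma gJoinQuotient_mulVec_eq_smul_iff (S m t p : ℕ) (w : Fin 3 → ℝ) (x : ℝ) :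
    gJoinQuotient S m t p *ᵥ w = x • w ↔
      (S - 1) * w 0 + m * w 1 + t * p * w 2 = x * w 0 ∧ S * w 0 + (m - 1) * w 1 = x * w 1 ∧
        S * w 0 + (p - 1) * w 2 = x * w 2 := by
  simp [funext_iff, Fin.forall_fin_succ, gJoinQuotient, dotProduct, Fin.sum_univ_three]

section gJoin

variable {S m t p : ℕ} [DecidableRel (gJoin S m t p).Adj]

lemma spectrum_gJoinQuotient_subset (hS : 1 ≤ S) (hm : 1 ≤ m) (ht : 1 ≤ t) (hp : 1 ≤ p) :
    spectrum ℝ (gJoinQuotient S m t p) ⊆ spectrum ℝ ((gJoin S m t p).adjMatrix ℝ) := by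
  intro x hx
  obtain ⟨w, hw, hBw⟩ := mem_spectrum_iff_exists_mulVec_eq_smul_s12.1 hx
  obtain ⟨e0, e1, e2⟩ := (gJoinQuotient_mulVec_eq_smul_iff S m t p w x).1 hBw
  unfold gJoin at *
  rw [mem_spectrum_iff_exists_mulVec_eq_smul_s12]
  refine ⟨joinCliques.blockVec S _ (w 0) (Fin.cons (w 1) fun _ => w 2), ?_, ?_⟩
  · contrapose! hw
    have hv := congrFun hw
    funext i
    fin_cases i
    · simpa [joinCliques.blockVec] using hv (.inl ⟨0, hS⟩)
    · simpa [joinCliques.blockVec] using hv (.inr ⟨0, ⟨0, hm⟩⟩)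
    · have h2 := hv (.inr ⟨Fin.succ ⟨0, ht⟩, ⟨0, hp⟩⟩)
      simp only [joinCliques.blockVec, Sum.elim_inr, Fin.cons_succ, Pi.zero_apply] at h2
      simpa using h2
  · rw [joinCliques.mulVec_blockVec, joinCliques.smul_blockVec]
    congr 1
    · simp only [Fin.sum_univ_succ, Fin.cons_zero, Fin.cons_succ, Finset.sum_const,
        Finset.card_univ, Fintype.card_fin, nsmul_eq_mul]
      linarith
    · funext i
      cases i using Fin.cases
      · simp only [Fin.cons_zero]
        linarith
      · simp only [Fin.cons_succ]
        linarith

lemma mem_spectrum_gJoinQuotient {x : ℝ} (hx1 : x ≠ -1) (hxp : x ≠ p - 1)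
    (hx : x ∈ spectrum ℝ ((gJoin S m t p).adjMatrix ℝ)) :
    x ∈ spectrum ℝ (gJoinQuotient S m t p) := by
  obtain ⟨v, hv, hAv⟩ := mem_spectrum_iff_exists_mulVec_eq_smul_s12.1 hx
  unfold gJoin at *
  obtain ⟨a, β, rfl, ha, hβ⟩ := joinCliques.exists_blockVec_of_mulVec_eq_smul hx1 hAv
  have hxp' : x - (p - 1) ≠ 0 := sub_ne_zero.2 hxp
  set c := S * a / (x - (p - 1))
  have hc' : (x - (p - 1)) * c = S * a := mul_div_cancel₀ _ hxp'
  have hc (i : Fin t) : β i.succ = c := by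
    have := hβ i.succ
    rw [Fin.cons_succ] at this
    rw [eq_div_iff hxp']
    linarith
  have hβ0 := hβ 0
  rw [Fin.cons_zero] at hβ0
  simp only [Fin.sum_univ_succ, Fin.cons_zero, Fin.cons_succ, hc, Finset.sum_const,
    Finset.card_univ, Fintype.card_fin, nsmul_eq_mul] at ha
  rw [mem_spectrum_iff_exists_mulVec_eq_smul_s12]
  refine ⟨![a, β 0, c], ?_, (gJoinQuotient_mulVec_eq_smul_iff ..).2 ?_⟩
  · contrapose! hv
    have h0 := congrFun hv 0
    have h1 := congrFun hv 1
    have h2 := congrFun hv 2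
    simp only [cons_val_zero, cons_val_one, cons_val_two, head_cons, tail_cons,
      Pi.zero_apply] at h0 h1 h2
    funext u
    rcases u with j | ⟨i, k⟩
    · simp [joinCliques.blockVec, h0]
    · cases i using Fin.cases
      · simp [joinCliques.blockVec, h1]
      · simp [joinCliques.blockVec, hc, h2]
  · simp only [cons_val_zero, cons_val_one, cons_val_two, head_cons, tail_cons]
    exact ⟨by linarith, by linarith, by linarith⟩

end gJoin

theorem isGreatest_spectrum_gJoinQuotient_specRad {S m t p : ℕ} (hS : 1 ≤ S) (hm : 1 ≤ m)
    (ht : 1 ≤ t) (hp : 1 ≤ p) (hpm : p < S + m) :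
    IsGreatest (spectrum ℝ (gJoinQuotient S m t p)) (specRad (gJoin S m t p)) := by
  classical
  have hsub := spectrum_gJoinQuotient_subset (m := m) hS hm ht hp
  have heval : (gJoinQuotient S m t p).charpoly.eval ((S : ℝ) + m - 1) = -(t * p * S ^ 2) := by
    rw [eval_charpoly_gJoinQuotient]
    ring
  obtain ⟨x₀, hx₀, hx₀_ge⟩ := exists_mem_spectrum_ge_of_eval_charpoly_nonpos _
    (heval ▸ neg_nonpos.2 (by positivity))
  have hρ_ge := le_specRad (hsub hx₀)
  have hpm' : (p : ℝ) < S + m := by exact_mod_cast hpm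
  exact ⟨mem_spectrum_gJoinQuotient (by linarith) (by linarith)
    (specRad_mem_spectrum ⟨x₀, hsub hx₀⟩), fun x hx => le_specRad (hsub hx)⟩

/-- Let `δ ≥ 3`, `s` and `n` be integers with `1 ≤ s ≤ δ − 1` and
`n ≥ ((δ−2)s+2)(δ+1−s) + s`.  Then the spectral radius of the graph
`G₃ = K_s ∨ (K_{n−s−((δ−2)s+1)(δ+1−s)} ∪ ((δ−2)s+1)K_{δ+1−s})` equals the largest real
root of the cubic polynomial
`φ(x) = x³ + ((−δ+2)s² + (δ²−δ−2)s − n + 3)x²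
  + ((δ²−3δ+2)s² − (n + δ³ − 2δ² − 2δ + 1)s + δn − n − δ² − 2δ + 2)x
  + ((2−δ)s³ + (δ²−δ−3)s² + δs + δ)n − (δ−2)²s⁵ + (2δ³−6δ²−δ+10)s⁴
  − (δ⁴−2δ³−6δ²+7δ+10)s³ − (2δ³−δ²−5δ−5)s² − (δ³−δ)s − δ² − 2δ`. -/
theorem stmt_12 (δ s n : ℕ) (hδ : 3 ≤ δ) (hs₁ : 1 ≤ s) (hs₂ : s ≤ δ - 1)
    (hn : ((δ - 2) * s + 2) * (δ + 1 - s) + s ≤ n)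
    (φ : ℝ → ℝ)
    (hφ : φ = fun x =>
      x ^ 3
        + ((-(δ : ℝ) + 2) * s ^ 2 + ((δ : ℝ) ^ 2 - (δ : ℝ) - 2) * s - (n : ℝ) + 3) * x ^ 2
        + (((δ : ℝ) ^ 2 - 3 * (δ : ℝ) + 2) * s ^ 2
            - ((n : ℝ) + (δ : ℝ) ^ 3 - 2 * (δ : ℝ) ^ 2 - 2 * (δ : ℝ) + 1) * s
            + (δ : ℝ) * n - (n : ℝ) - (δ : ℝ) ^ 2 - 2 * (δ : ℝ) + 2) * x
        + ((2 - (δ : ℝ)) * s ^ 3 + ((δ : ℝ) ^ 2 - (δ : ℝ) - 3) * s ^ 2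
            + (δ : ℝ) * s + (δ : ℝ)) * n
        - ((δ : ℝ) - 2) ^ 2 * s ^ 5
        + (2 * (δ : ℝ) ^ 3 - 6 * (δ : ℝ) ^ 2 - (δ : ℝ) + 10) * s ^ 4
        - ((δ : ℝ) ^ 4 - 2 * (δ : ℝ) ^ 3 - 6 * (δ : ℝ) ^ 2 + 7 * (δ : ℝ) + 10) * s ^ 3
        - (2 * (δ : ℝ) ^ 3 - (δ : ℝ) ^ 2 - 5 * (δ : ℝ) - 5) * s ^ 2
        - ((δ : ℝ) ^ 3 - (δ : ℝ)) * s - (δ : ℝ) ^ 2 - 2 * (δ : ℝ)) :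
    φ (specRad (gJoin s (n - s - ((δ - 2) * s + 1) * (δ + 1 - s))
        ((δ - 2) * s + 1) (δ + 1 - s))) = 0 ∧
      ∀ x : ℝ, φ x = 0 →
        x ≤ specRad (gJoin s (n - s - ((δ - 2) * s + 1) * (δ + 1 - s))
          ((δ - 2) * s + 1) (δ + 1 - s)) := by
  have hsplit : ((δ - 2) * s + 2) * (δ + 1 - s)
      = ((δ - 2) * s + 1) * (δ + 1 - s) + (δ + 1 - s) := by ring
  set t := (δ - 2) * s + 1 with ht
  set p := δ + 1 - s with hp
  set m := n - s - t * p with hm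
  obtain ⟨hρ, hmax⟩ := isGreatest_spectrum_gJoinQuotient_specRad (m := m) (t := t) (p := p) hs₁
    (by omega) (by omega) (by omega) (by omega)
  have hp_cast : (p : ℝ) = δ + 1 - s := by
    rw [hp, Nat.cast_sub (by omega)]
    push_cast; ring
  have ht_cast : (t : ℝ) = (δ - 2) * s + 1 := by
    rw [ht]
    push_cast [Nat.cast_sub (by omega : 2 ≤ δ)]; ring
  have hm_cast : (m : ℝ) = n - s - t * p := by
    rw [hm, Nat.cast_sub (by omega), Nat.cast_sub (by omega), Nat.cast_mul]
  have hφ_eq (x : ℝ) : φ x = (gJoinQuotient s m t p).charpoly.eval x := by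
    rw [eval_charpoly_gJoinQuotient, hφ, hm_cast, ht_cast, hp_cast]
    ring
  simp only [hφ_eq, ← Polynomial.IsRoot.def, ← mem_spectrum_iff_isRoot_charpoly]
  exact ⟨hρ, fun x hx => hmax hx⟩
end
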